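/- arXiv:1402.0904 — 2 statements merged into one kernel-verified Lean document; each statement's English description precedes it below -/
import Mathlib

section
/- Let K be a centrally-symmetric convex body in R^n with B_2^n ⊆ ρK for some ρ ≥ 1. Suppose W is an m-dimensional linear subspace of R^n such that P_{W^⊥}(K) ⊇ B_2^n ∩ W^⊥. Then N(B_2^n, 4K) ≤ (3ρ)^m. -/
open MeasureTheory Metric
open scoped RealInnerProductSpace ENNReal Pointwise

/-- volume-radius of a subset of a finite-dimensional inner product space,
computed via an isometry with the standard Euclidean space. -/
noncomputable def vr (S : Type) [NormedAddCommGroup S] [InnerProductSpace ℝ S]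
    [FiniteDimensional ℝ S] (A : Set S) : ℝ :=
  ((volume ((stdOrthonormalBasis ℝ S).repr '' A)).toReal /
    (volume (closedBall (0 : EuclideanSpace ℝ (Fin (Module.finrank ℝ S))) 1)).toReal) ^
      ((1 : ℝ) / (Module.finrank ℝ S))

/-- `w_k(K)`: supremum of volume-radii of `k`-dimensional central sections. -/
noncomputable def wk {n : ℕ} (K : Set (EuclideanSpace ℝ (Fin n))) (k : ℕ) : ℝ :=
  sSup { r | ∃ F : Submodule ℝ (EuclideanSpace ℝ (Fin n)),
    Module.finrank ℝ F = k ∧ r = vr F ((↑·) ⁻¹' K) }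

/-- `w_k^-(K)`: infimum of volume-radii of `k`-dimensional central sections. -/
noncomputable def wkMinus {n : ℕ} (K : Set (EuclideanSpace ℝ (Fin n))) (k : ℕ) : ℝ :=
  sInf { r | ∃ F : Submodule ℝ (EuclideanSpace ℝ (Fin n)),
    Module.finrank ℝ F = k ∧ r = vr F ((↑·) ⁻¹' K) }

/-- `v_k(K)`: supremum of volume-radii of `k`-dimensional orthogonal projections. -/
noncomputable def vk {n : ℕ} (K : Set (EuclideanSpace ℝ (Fin n))) (k : ℕ) : ℝ :=
  sSup { r | ∃ F : Submodule ℝ (EuclideanSpace ℝ (Fin n)),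
    Module.finrank ℝ F = k ∧ r = vr F ((Submodule.orthogonalProjectionOnto F) '' K) }

/-- `v_k^-(K)`: infimum of volume-radii of `k`-dimensional orthogonal projections. -/
noncomputable def vkMinus {n : ℕ} (K : Set (EuclideanSpace ℝ (Fin n))) (k : ℕ) : ℝ :=
  sInf { r | ∃ F : Submodule ℝ (EuclideanSpace ℝ (Fin n)),
    Module.finrank ℝ F = k ∧ r = vr F ((Submodule.orthogonalProjectionOnto F) '' K) }

/-- covering number `N(A, B)`: minimal number of translates of `B` covering `A`. -/
noncomputable def covN {E : Type} [AddGroup E] (A B : Set E) : ℕ :=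
  sInf {N | ∃ t : Finset E, t.card = N ∧ A ⊆ ⋃ x ∈ t, x +ᵥ B}

/-- entropy numbers `e_k(A, B)`. -/
noncomputable def ek {E : Type} [NormedAddCommGroup E] [NormedSpace ℝ E]
    (A B : Set E) (k : ℕ) : ℝ :=
  sInf {t : ℝ | 0 < t ∧ covN A (t • B) ≤ 2 ^ k}

/-- Gelfand numbers `c_k(K)` (w.r.t. the Euclidean ball). -/
noncomputable def ck {n : ℕ} (K : Set (EuclideanSpace ℝ (Fin n))) (k : ℕ) : ℝ :=
  sInf {R | 0 < R ∧ ∃ F : Submodule ℝ (EuclideanSpace ℝ (Fin n)),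
    Module.finrank ℝ F = n - k ∧ K ∩ (F : Set (EuclideanSpace ℝ (Fin n))) ⊆ closedBall 0 R}

/-- the `L_q`-centroid body `Z_q(μ)`, defined as the convex set with support function
`y ↦ (∫ |⟨x,y⟩|^q dμ)^{1/q}`. -/
noncomputable def Zbody {S : Type} [NormedAddCommGroup S] [InnerProductSpace ℝ S]
    [MeasurableSpace S] (μ : Measure S) (q : ℝ) : Set S :=
  {x | ∀ y, ⟪x, y⟫ ≤ (∫ z, |⟪z, y⟫| ^ q ∂μ) ^ (1 / q)}

/-- the polar body. -/
def pol {S : Type} [NormedAddCommGroup S] [InnerProductSpace ℝ S] (A : Set S) : Set S :=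
  {y | ∀ x ∈ A, ⟪x, y⟫ ≤ 1}

/-!
For `x` in the unit ball pick `y ∈ K` with the same projection onto `Wᗮ`; then
`x - y ∈ W ∩ (ρ + 1) • K`. The section `C = K ∩ W` is a symmetric convex body in the
`m`-dimensional space `W`, so a maximal `3 • C`-separated subset of `(ρ + 1) • C` has at most
`(1 + 2 (ρ + 1) / 3) ^ m ≤ (3 ρ) ^ m` points (the disjoint translates of `(3 / 2) • C` fit in
`(ρ + 1 + 3 / 2) • C`) and its `3 • C`-translates cover `(ρ + 1) • C`. Adding back `y` turns
them into translates of `3 • K + K = 4 • K` covering the ball.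
-/

open Set Module

lemma covN_le_card {E : Type} [AddGroup E] {A B : Set E} (t : Finset E)
    (h : A ⊆ ⋃ x ∈ t, x +ᵥ B) : covN A B ≤ t.card :=
  Nat.sInf_le ⟨t, rfl, h⟩

section Packing

variable {E : Type*} [NormedAddCommGroup E] [NormedSpace ℝ E] {C : Set E}

lemma pairwiseDisjoint_vadd_smul (hCconv : Convex ℝ C) (hCsymm : ∀ x ∈ C, -x ∈ C)
    {r : ℝ} (hr : 0 ≤ r) {t : Set E} (hsep : t.Pairwise fun x y => x - y ∉ (2 * r) • C) :
    t.PairwiseDisjoint fun x => x +ᵥ r • C := by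
  intro x hx y hy hxy
  rw [Function.onFun, Set.disjoint_left]
  rintro _ ⟨_, ⟨a, ha, rfl⟩, rfl⟩ ⟨_, ⟨b, hb, rfl⟩, hab⟩
  refine hsep hx hy hxy ?_
  have hxy : x - y = r • b + r • -a := by
    simp only [vadd_eq_add] at hab
    rw [smul_neg]
    linear_combination (norm := module) (-1 : ℝ) • hab
  rw [two_mul, hCconv.add_smul hr hr, hxy]
  exact add_mem_add (smul_mem_smul_set hb) (smul_mem_smul_set (hCsymm a ha))

variable [FiniteDimensional ℝ E] [MeasurableSpace E] [BorelSpace E]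
  (μ : Measure E) [μ.IsAddHaarMeasure]

lemma card_le_of_pairwise_sub_notMem_smul (hCmeas : MeasurableSet C) (hCfin : μ C ≠ ∞)
    (hC0 : μ C ≠ 0) (hCconv : Convex ℝ C) (hCsymm : ∀ x ∈ C, -x ∈ C) {T s : ℝ}
    (hT : 0 ≤ T) (hs : 0 < s) {t : Finset E} (hsub : ↑t ⊆ T • C)
    (hsep : (t : Set E).Pairwise fun x y => x - y ∉ s • C) :
    (t.card : ℝ) ≤ (1 + 2 * T / s) ^ finrank ℝ E := by
  set r := s / 2
  have hr : 0 < r := by positivity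
  have hdisj : (t : Set E).PairwiseDisjoint fun x => x +ᵥ r • C :=
    pairwiseDisjoint_vadd_smul hCconv hCsymm hr.le (by rwa [mul_div_cancel₀ s two_ne_zero])
  have hunion : ⋃ x ∈ t, x +ᵥ r • C ⊆ (T + r) • C := by
    rw [hCconv.add_smul hT hr.le]
    exact iUnion₂_subset fun x hx => vadd_set_subset_add (hsub hx)
  have hvol : (t.card : ℝ≥0∞) * ENNReal.ofReal (r ^ finrank ℝ E) * μ C ≤
      ENNReal.ofReal ((T + r) ^ finrank ℝ E) * μ C := by
    calc (t.card : ℝ≥0∞) * ENNReal.ofReal (r ^ finrank ℝ E) * μ C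
        = ∑ x ∈ t, μ (x +ᵥ r • C) := by
          simp only [measure_vadd, Measure.addHaar_smul_of_nonneg μ hr.le, Finset.sum_const,
            nsmul_eq_mul, mul_assoc]
      _ = μ (⋃ x ∈ t, x +ᵥ r • C) :=
          (measure_biUnion_finset hdisj fun x _ =>
            MeasurableSet.const_vadd (hCmeas.const_smul₀ r) x).symm
      _ ≤ ENNReal.ofReal ((T + r) ^ finrank ℝ E) * μ C := by
          rw [← Measure.addHaar_smul_of_nonneg μ (by positivity)]
          exact measure_mono hunion
  have hreal : (t.card : ℝ) * r ^ finrank ℝ E ≤ (T + r) ^ finrank ℝ E := by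
    rw [← ENNReal.ofReal_le_ofReal_iff (by positivity), ENNReal.ofReal_mul (by positivity),
      ENNReal.ofReal_natCast]
    exact (ENNReal.mul_le_mul_iff_left hC0 hCfin).mp hvol
  calc (t.card : ℝ) ≤ (T + r) ^ finrank ℝ E / r ^ finrank ℝ E := by
        rwa [le_div_iff₀ (by positivity)]
    _ = (1 + 2 * T / s) ^ finrank ℝ E := by
        rw [← div_pow]
        congr 1
        field_simp
        ring

lemma exists_finset_card_le_smul_subset_biUnion (hCmeas : MeasurableSet C)
    (hCfin : μ C ≠ ∞) (hC0 : μ C ≠ 0) (hCconv : Convex ℝ C) (hCsymm : ∀ x ∈ C, -x ∈ C)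
    {T s : ℝ} (hT : 0 ≤ T) (hs : 0 < s) :
    ∃ t : Finset E, (t.card : ℝ) ≤ (1 + 2 * T / s) ^ finrank ℝ E ∧
      T • C ⊆ ⋃ x ∈ t, x +ᵥ s • C := by
  classical
  set Separated : Finset E → Prop := fun t =>
    ↑t ⊆ T • C ∧ (t : Set E).Pairwise fun x y => x - y ∉ s • C
  have hbound : ∀ t, Separated t → (t.card : ℝ) ≤ (1 + 2 * T / s) ^ finrank ℝ E :=
    fun t ht => card_le_of_pairwise_sub_notMem_smul μ hCmeas hCfin hC0 hCconv hCsymm hT hs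
      ht.1 ht.2
  obtain ⟨t, ht, hmax⟩ : ∃ t, Separated t ∧ ∀ t', Separated t' → t'.card ≤ t.card := by
    have hne : {k | ∃ t, Separated t ∧ t.card = k}.Nonempty := ⟨0, ∅, by simp [Separated]⟩
    have hbdd : BddAbove {k | ∃ t, Separated t ∧ t.card = k} :=
      ⟨⌊(1 + 2 * T / s) ^ finrank ℝ E⌋₊, fun k ⟨t, ht, hk⟩ => hk ▸ Nat.le_floor (hbound t ht)⟩
    obtain ⟨t, ht, hk⟩ := Nat.sSup_mem hne hbdd
    exact ⟨t, ht, fun t' ht' => hk ▸ le_csSup hbdd ⟨t', ht', rfl⟩⟩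
  refine ⟨t, hbound t ht, fun p hp => ?_⟩
  by_contra hcov
  simp only [mem_iUnion, not_exists] at hcov
  have hfar : ∀ x ∈ t, p - x ∉ s • C := fun x hx hpx =>
    hcov x hx ⟨p - x, hpx, add_sub_cancel x p⟩
  have hsymm : ∀ z, z ∈ s • C → -z ∈ s • C := by
    rintro _ ⟨c, hc, rfl⟩
    exact ⟨-c, hCsymm c hc, smul_neg s c⟩
  have h0 : (0 : E) ∈ s • C := by
    obtain ⟨c, hc⟩ := nonempty_of_measure_ne_zero hC0
    refine ⟨0, ?_, smul_zero s⟩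
    simpa using hCconv hc (hCsymm c hc) (by norm_num : (0 : ℝ) ≤ 1 / 2)
      (by norm_num : (0 : ℝ) ≤ 1 / 2) (by norm_num)
  have hpt : p ∉ t := fun hpt => hcov p hpt ⟨0, h0, add_zero p⟩
  have hins : Separated (insert p t) := by
    refine ⟨by simpa [insert_subset_iff] using ⟨hp, ht.1⟩, ?_⟩
    rw [Finset.coe_insert, pairwise_insert]
    exact ⟨ht.2, fun x hx _ => ⟨hfar x hx, fun hxp => hfar x hx (by simpa using hsymm _ hxp)⟩⟩
  have := hmax _ hins
  rw [Finset.card_insert_of_notMem hpt] at this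
  omega

end Packing

lemma closedBall_inv_subset_of_closedBall_subset_smul {E : Type*} [NormedAddCommGroup E]
    [NormedSpace ℝ E] {K : Set E} {ρ : ℝ} (hρ : 0 < ρ) (h : closedBall (0 : E) 1 ⊆ ρ • K) :
    closedBall (0 : E) ρ⁻¹ ⊆ K := by
  rw [subset_smul_set_iff₀ hρ.ne', smul_unitClosedBall_of_nonneg (inv_nonneg.mpr hρ.le)] at h
  exact h

section Projection

variable {E : Type} [NormedAddCommGroup E] [InnerProductSpace ℝ E] {K : Set E}
  {W : Submodule ℝ E} [W.HasOrthogonalProjection] {ρ : ℝ}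

lemma exists_eq_smul_add_of_closedBall_subset (hKconv : Convex ℝ K)
    (hKsymm : ∀ x ∈ K, -x ∈ K) (hρ : 0 ≤ ρ) (hball : closedBall (0 : E) 1 ⊆ ρ • K)
    (hproj : closedBall (0 : Wᗮ) 1 ⊆ Wᗮ.orthogonalProjectionOnto '' K)
    {x : E} (hx : x ∈ closedBall 0 1) :
    ∃ k : W, (k : E) ∈ K ∧ ∃ y ∈ K, x = (ρ + 1) • (k : E) + y := by
  have hpx : Wᗮ.orthogonalProjectionOnto x ∈ closedBall (0 : Wᗮ) 1 :=
    mem_closedBall_zero_iff.mpr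
      ((Wᗮ.norm_orthogonalProjectionOnto_apply_le x).trans (mem_closedBall_zero_iff.mp hx))
  obtain ⟨y, hy, hyx⟩ := hproj hpx
  have hxyW : x - y ∈ W := by
    rw [← W.orthogonal_orthogonal, ← Submodule.orthogonalProjectionOnto_eq_zero_iff, map_sub,
      hyx, sub_self]
  have hxyK : x - y ∈ (ρ + 1) • K := by
    rw [hKconv.add_smul hρ zero_le_one, one_smul, sub_eq_add_neg]
    exact add_mem_add (hball hx) (hKsymm y hy)
  obtain ⟨k, hk, hkxy : (ρ + 1) • k = x - y⟩ := hxyK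
  have hkW : k ∈ W := by
    rw [← inv_smul_smul₀ (by linarith : ρ + 1 ≠ 0) k, hkxy]
    exact W.smul_mem _ hxyW
  exact ⟨⟨k, hkW⟩, hk, y, hy, by rw [Submodule.coe_mk, hkxy, sub_add_cancel]⟩

lemma covN_closedBall_le_card (hKconv : Convex ℝ K) (hKsymm : ∀ x ∈ K, -x ∈ K) (hρ : 0 ≤ ρ)
    (hball : closedBall (0 : E) 1 ⊆ ρ • K)
    (hproj : closedBall (0 : Wᗮ) 1 ⊆ Wᗮ.orthogonalProjectionOnto '' K) {t : Finset W}
    (ht : (ρ + 1) • ((↑) ⁻¹' K : Set W) ⊆ ⋃ v ∈ t, v +ᵥ (3 : ℝ) • ((↑) ⁻¹' K : Set W)) :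
    covN (closedBall (0 : E) 1) ((4 : ℝ) • K) ≤ t.card := by
  rw [← Finset.card_map (Function.Embedding.subtype _)]
  refine covN_le_card _ fun x hx => ?_
  obtain ⟨k, hk, y, hy, rfl⟩ := exists_eq_smul_add_of_closedBall_subset hKconv hKsymm hρ hball
    hproj hx
  obtain ⟨v, hv, _, ⟨c, hc, rfl⟩, hvc⟩ := mem_iUnion₂.mp (ht (smul_mem_smul_set (a := ρ + 1) hk))
  refine mem_iUnion₂.mpr ⟨v, Finset.mem_map_of_mem _ hv, (3 : ℝ) • (c : E) + y, ?_, ?_⟩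
  · rw [show (4 : ℝ) = 3 + 1 by norm_num, hKconv.add_smul (by norm_num) zero_le_one, one_smul]
    exact add_mem_add (smul_mem_smul_set (show (c : E) ∈ K from hc)) hy
  · have hvc' : (v : E) + (3 : ℝ) • (c : E) = (ρ + 1) • (k : E) := congrArg Subtype.val hvc
    show (v : E) + _ = _
    rw [← add_assoc, hvc']

end Projection

theorem stmt6_general (n : ℕ) (K : Set (EuclideanSpace ℝ (Fin n)))
    (hKcomp : IsCompact K) (hKconv : Convex ℝ K) (hKsymm : K = -K)
    (ρ : ℝ) (hρ : 1 ≤ ρ)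
    (hball : closedBall (0 : EuclideanSpace ℝ (Fin n)) 1 ⊆ ρ • K)
    (W : Submodule ℝ (EuclideanSpace ℝ (Fin n))) (m : ℕ)
    (hW : Module.finrank ℝ W = m)
    (hproj : closedBall (0 : ↥Wᗮ) 1 ⊆ (Submodule.orthogonalProjectionOnto Wᗮ) '' K) :
    (covN (closedBall (0 : EuclideanSpace ℝ (Fin n)) 1) ((4 : ℝ) • K) : ℝ) ≤ (3 * ρ) ^ m := by
  have hKsymm' : ∀ x ∈ K, -x ∈ K := fun x hx => hKsymm ▸ neg_mem_neg.mpr hx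
  have hρ0 : 0 < ρ := by linarith
  set C : Set W := (↑) ⁻¹' K
  have hCcomp : IsCompact C :=
    W.closed_of_finiteDimensional.isClosedEmbedding_subtypeVal.isCompact_preimage hKcomp
  have hC0 : Measure.addHaar C ≠ 0 := by
    refine (measure_closedBall_pos Measure.addHaar (0 : W) (inv_pos.mpr hρ0)).ne' ∘
      measure_mono_null fun w hw => closedBall_inv_subset_of_closedBall_subset_smul hρ0 hball ?_
    simpa using hw
  obtain ⟨t, hcard, hcover⟩ := exists_finset_card_le_smul_subset_biUnion Measure.addHaar
    hCcomp.isClosed.measurableSet hCcomp.measure_lt_top.ne hC0 (hKconv.linear_preimage W.subtype)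
    (fun x hx => hKsymm' x hx) (by linarith : (0 : ℝ) ≤ ρ + 1) (by norm_num : (0 : ℝ) < 3)
  calc (covN (closedBall (0 : EuclideanSpace ℝ (Fin n)) 1) ((4 : ℝ) • K) : ℝ)
      ≤ t.card := by
        exact_mod_cast covN_closedBall_le_card hKconv hKsymm' hρ0.le hball hproj hcover
    _ ≤ (1 + 2 * (ρ + 1) / 3) ^ m := hW ▸ hcard
    _ ≤ (3 * ρ) ^ m := by gcongr; linarith

/-- entropy extension lemma: `B₂ⁿ ⊆ ρK` and `P_{W^⊥}K ⊇ B_{W^⊥}`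
imply `N(B₂ⁿ, 4K) ≤ (3ρ)^m`. -/
theorem stmt6 (n : ℕ) (hn : 1 ≤ n) (K : Set (EuclideanSpace ℝ (Fin n)))
    (hKcomp : IsCompact K) (hKconv : Convex ℝ K) (hKsymm : K = -K)
    (hKint : (interior K).Nonempty)
    (ρ : ℝ) (hρ : 1 ≤ ρ)
    (hball : closedBall (0 : EuclideanSpace ℝ (Fin n)) 1 ⊆ ρ • K)
    (W : Submodule ℝ (EuclideanSpace ℝ (Fin n))) (m : ℕ)
    (hW : Module.finrank ℝ W = m)
    (hproj : closedBall (0 : ↥Wᗮ) 1 ⊆ (Submodule.orthogonalProjectionOnto Wᗮ) '' K) :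
    (covN (closedBall (0 : EuclideanSpace ℝ (Fin n)) 1) ((4 : ℝ) • K) : ℝ) ≤ (3 * ρ) ^ m :=
  stmt6_general n K hKcomp hKconv hKsymm ρ hρ hball W m hW hproj
end

section
/- Let ℰ be a centered ellipsoid in R^n with semi-axes λ_1 ≥ ⋯ ≥ λ_n > 0. Then for every j ≥ 1, the entropy numbers satisfy e_j(ℰ, B_2^n) ≤ C sup_{1 ≤ m ≤ min(j,n)} 2^{-j/m} (λ_1 ⋯ λ_m)^{1/m} for a universal constant C, i.e. e_j(ℰ, B_2^n) ≤ C sup_{1 ≤ m ≤ min(j,n)} 2^{-j/m} w_m(ℰ). -/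
/-!
If a convex body `K` in a `d`-dimensional space contains the ball `r B`, then a maximal
`r`-separated subset of `K` is an `r`-net of `K`, and the disjoint balls of radius `r / 2` around
its points lie in `K + (r / 2) B ⊆ (3 / 2) K`; so `K` is covered by `3 ^ d vol K / vol (r B)`
balls of radius `r`.

For the ellipsoid take `r = 3 S`, `S` the supremum on the right-hand side, and let `k` be the
number of semi-axes `λ_i ≥ r`. In the coordinates of these `k` axes the ellipsoid is a
`k`-dimensional ellipsoid containing `r B`, covered by `3 ^ k λ_1 ⋯ λ_k / r ^ k` balls of radius
`r`, while the other coordinates of a point of the ellipsoid have norm at most `r`. Comparing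
with `2 ^ (-j / m) w_m ≤ S` at `m = j` gives `k ≤ j` (else `w_j ≥ r`), and at `m = k` gives
`3 ^ k λ_1 ⋯ λ_k ≤ 2 ^ j r ^ k`. Hence `e_j ≤ 2 r = 6 S`.
-/

open MeasureTheory Metric
open scoped RealInnerProductSpace ENNReal Pointwise

open Finset Module
open scoped NNReal

namespace Metric

variable {X : Type*} [PseudoEMetricSpace X]

lemma exists_finset_isSeparated_isCover {A : Set X} {ε : ℝ≥0} {N : ℕ}
    (hN : ∀ C : Finset X, ↑C ⊆ A → IsSeparated ε (C : Set X) → C.card ≤ N) :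
    ∃ T : Finset X, ↑T ⊆ A ∧ IsSeparated ε (T : Set X) ∧ IsCover ε A T := by
  have hpack : packingNumber ε A ≠ ⊤ := by
    refine ne_top_of_le_ne_top (ENat.natCast_ne_top N) (iSup₂_le fun C hCA => iSup_le fun hC => ?_)
    by_contra! hlt
    obtain ⟨t, htC, ht⟩ := Set.exists_subset_encard_eq (Order.add_one_le_of_lt hlt)
    have htfin : t.Finite := Set.finite_of_encard_eq_coe (k := N + 1) (by simpa using ht)
    have hcard := hN htfin.toFinset (by simpa using htC.trans hCA) (by simpa using hC.subset htC)
    have : t.encard ≤ N := by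
      rw [← htfin.coe_toFinset, Set.encard_coe_eq_coe_finsetCard]
      exact_mod_cast hcard
    rw [ht] at this
    norm_cast at this
    omega
  have hfin : (maximalSeparatedSet ε A).Finite :=
    Set.encard_ne_top_iff.mp (by rwa [encard_maximalSeparatedSet hpack])
  exact ⟨hfin.toFinset, by simpa using maximalSeparatedSet_subset,
    by simpa using isSeparated_maximalSeparatedSet,
    by simpa using isCover_maximalSeparatedSet hpack⟩

end Metric

section Volumetric

variable {E : Type*} [NormedAddCommGroup E] [MeasurableSpace E] [BorelSpace E]
  (μ : Measure E) [μ.IsAddHaarMeasure]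

lemma card_mul_measure_closedBall_le_of_isSeparated {A B : Set E} {ε : ℝ≥0}
    (hAB : A + closedBall 0 (ε / 2) ⊆ B) {C : Finset E} (hCA : ↑C ⊆ A)
    (hC : IsSeparated ε (C : Set E)) :
    C.card * μ (closedBall 0 (ε / 2)) ≤ μ B := by
  have hdisj : (C : Set E).PairwiseDisjoint fun c => closedBall c (ε / 2) := by
    intro x hx y hy hxy
    refine closedBall_disjoint_closedBall ?_
    have : (ε : ℝ) < dist x y := by
      have : (ε : ℝ≥0∞) < edist x y := hC hx hy hxy
      rw [edist_nndist, ENNReal.coe_lt_coe] at this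
      exact_mod_cast this
    linarith
  have hsub : (⋃ c ∈ C, closedBall c (ε / 2)) ⊆ B := by
    refine Set.iUnion₂_subset fun c hc z hz => hAB ?_
    rw [← add_sub_cancel c z]
    exact Set.add_mem_add (hCA hc) (by rwa [mem_closedBall_zero_iff, ← dist_eq_norm])
  calc C.card * μ (closedBall 0 (ε / 2)) = ∑ c ∈ C, μ (closedBall c (ε / 2)) := by
        simp [Measure.addHaar_closedBall_center]
    _ = μ (⋃ c ∈ C, closedBall c (ε / 2)) :=
        (measure_biUnion_finset hdisj fun c _ => measurableSet_closedBall).symm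
    _ ≤ μ B := measure_mono hsub

variable [NormedSpace ℝ E] [FiniteDimensional ℝ E]

lemma card_mul_measure_closedBall_le_three_pow {K : Set E} (hK : Convex ℝ K) {r : ℝ≥0}
    (hrK : closedBall 0 r ⊆ K) {C : Finset E} (hCK : ↑C ⊆ K) (hC : IsSeparated r (C : Set E)) :
    C.card * μ (closedBall 0 r) ≤ 3 ^ finrank ℝ E * μ K := by
  set d := finrank ℝ E
  have hhalf : closedBall (0 : E) (r / 2) = (1 / 2 : ℝ) • closedBall 0 r := by
    rw [smul_closedBall (1 / 2 : ℝ) (0 : E) r.coe_nonneg, smul_zero,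
      Real.norm_of_nonneg (by norm_num)]
    ring_nf
  have hthick : K + closedBall 0 (r / 2) ⊆ (3 / 2 : ℝ) • K := by
    rw [show (3 / 2 : ℝ) = 1 + 1 / 2 by norm_num, hK.add_smul zero_le_one (by norm_num),
      one_smul, hhalf]
    exact Set.add_subset_add_left (Set.smul_set_mono hrK)
  have h := card_mul_measure_closedBall_le_of_isSeparated μ hthick hCK hC
  rw [hhalf, Measure.addHaar_smul_of_nonneg μ (by norm_num),
    Measure.addHaar_smul_of_nonneg μ (by norm_num)] at h
  calc C.card * μ (closedBall 0 r)
      = ENNReal.ofReal (2 ^ d) *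
          (C.card * (ENNReal.ofReal ((1 / 2) ^ d) * μ (closedBall 0 r))) := by
        rw [mul_left_comm, ← mul_assoc (ENNReal.ofReal _), ← ENNReal.ofReal_mul (by positivity),
          ← mul_pow]
        norm_num
    _ ≤ ENNReal.ofReal (2 ^ d) * (ENNReal.ofReal ((3 / 2) ^ d) * μ K) := by gcongr
    _ = 3 ^ d * μ K := by
        rw [← mul_assoc, ← ENNReal.ofReal_mul (by positivity), ← mul_pow]
        norm_num

lemma exists_isCover_card_mul_measure_closedBall_le {K : Set E} (hK : Convex ℝ K) {r : ℝ≥0}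
    (hr : 0 < r) (hrK : closedBall 0 r ⊆ K) (hKμ : μ K ≠ ∞) :
    ∃ T : Finset E, IsCover r K T ∧ T.card * μ (closedBall 0 r) ≤ 3 ^ finrank ℝ E * μ K := by
  set M := 3 ^ finrank ℝ E * μ K / μ (closedBall 0 r)
  have hball : μ (closedBall 0 r) ≠ 0 := (measure_closedBall_pos μ 0 (by exact_mod_cast hr)).ne'
  have hM : M ≠ ∞ := ENNReal.div_ne_top (ENNReal.mul_ne_top (by simp) hKμ) hball
  obtain ⟨T, hTK, hTsep, hTcov⟩ := exists_finset_isSeparated_isCover (N := ⌊M.toReal⌋₊)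
    fun C hCK hC => by
      have : (C.card : ℝ≥0∞) ≤ M :=
        (ENNReal.le_div_iff_mul_le (.inl hball) (.inl measure_closedBall_lt_top.ne)).2
          (card_mul_measure_closedBall_le_three_pow μ hK hrK hCK hC)
      exact Nat.le_floor (by simpa using ENNReal.toReal_mono hM this)
  exact ⟨T, hTcov, card_mul_measure_closedBall_le_three_pow μ hK hrK hTK hTsep⟩

end Volumetric

section AxisEllipsoid

variable {ι : Type*} [Fintype ι]

def axisEllipsoid (a : ι → ℝ) : Set (EuclideanSpace ℝ ι) :=
  {x | ∑ i, (x i / a i) ^ 2 ≤ 1}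

lemma axisEllipsoid_eq_image [DecidableEq ι] {a : ι → ℝ} (ha : ∀ i, a i ≠ 0) :
    axisEllipsoid a = Matrix.toLpLin 2 2 (Matrix.diagonal a) '' closedBall 0 1 := by
  ext x
  simp only [axisEllipsoid, Set.mem_ofPred_eq, Set.mem_image, mem_closedBall_zero_iff,
    ← sq_le_one_iff₀ (norm_nonneg _), EuclideanSpace.real_norm_sq_eq]
  constructor
  · intro hx
    refine ⟨WithLp.toLp 2 (fun i => x i / a i), hx, ?_⟩
    ext i
    simp [Matrix.mulVec_diagonal, mul_div_cancel₀ _ (ha i)]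
  · rintro ⟨y, hy, rfl⟩
    simpa [Matrix.mulVec_diagonal, mul_div_cancel_left₀ _ (ha _)] using hy

lemma convex_axisEllipsoid {a : ι → ℝ} (ha : ∀ i, a i ≠ 0) : Convex ℝ (axisEllipsoid a) := by
  classical
  rw [axisEllipsoid_eq_image ha]
  exact (convex_closedBall 0 1).linear_image _

lemma volume_axisEllipsoid [DecidableEq ι] {a : ι → ℝ} (ha : ∀ i, 0 < a i) :
    volume (axisEllipsoid a) =
      ENNReal.ofReal (∏ i, a i) * volume (closedBall (0 : EuclideanSpace ℝ ι) 1) := by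
  rw [axisEllipsoid_eq_image fun i => (ha i).ne', Measure.addHaar_image_linearMap,
    LinearMap.det_toLpLin, Matrix.det_diagonal, abs_of_pos (prod_pos fun i _ => ha i)]

lemma closedBall_subset_axisEllipsoid {a : ι → ℝ} {r : ℝ} (hr : 0 < r) (hra : ∀ i, r ≤ a i) :
    closedBall 0 r ⊆ axisEllipsoid a := by
  intro x hx
  rw [mem_closedBall_zero_iff] at hx
  calc ∑ i, (x i / a i) ^ 2 ≤ ∑ i, (x i / r) ^ 2 := by
        refine sum_le_sum fun i _ => ?_
        rw [div_pow, div_pow]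
        gcongr
        exact hra i
    _ = ‖x‖ ^ 2 / r ^ 2 := by simp [EuclideanSpace.real_norm_sq_eq, div_pow, sum_div]
    _ ≤ 1 := div_le_one_of_le₀ (by gcongr) (by positivity)

lemma exists_isCover_axisEllipsoid_of_le [DecidableEq ι] {a : ι → ℝ} (ha : ∀ i, 0 < a i)
    {r : ℝ≥0} (hr : 0 < r) (hra : ∀ i, (r : ℝ) ≤ a i) :
    ∃ T : Finset (EuclideanSpace ℝ ι), IsCover r (axisEllipsoid a) T ∧
      (T.card : ℝ) * (r : ℝ) ^ Fintype.card ι ≤ 3 ^ Fintype.card ι * ∏ i, a i := by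
  have hfin : volume (axisEllipsoid a) ≠ ∞ := by
    rw [volume_axisEllipsoid ha]
    exact ENNReal.mul_ne_top ENNReal.ofReal_ne_top measure_closedBall_lt_top.ne
  obtain ⟨T, hT, hcard⟩ := exists_isCover_card_mul_measure_closedBall_le
    (volume : Measure (EuclideanSpace ℝ ι))
    (convex_axisEllipsoid fun i => (ha i).ne') hr
    (closedBall_subset_axisEllipsoid (by exact_mod_cast hr) hra) hfin
  refine ⟨T, hT, ?_⟩
  have hV : volume (closedBall (0 : EuclideanSpace ℝ ι) 1) ≠ 0 :=
    (measure_closedBall_pos volume 0 one_pos).ne'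
  rw [Measure.addHaar_closedBall' volume 0 r.coe_nonneg, volume_axisEllipsoid ha,
    finrank_euclideanSpace, ← mul_assoc, ← mul_assoc,
    ENNReal.mul_le_mul_iff_left hV measure_closedBall_lt_top.ne] at hcard
  have hprod : 0 ≤ ∏ i, a i := prod_nonneg fun i _ => (ha i).le
  rw [← ENNReal.ofReal_le_ofReal_iff (by positivity)]
  rw [ENNReal.ofReal_mul (by positivity), ENNReal.ofReal_mul (by positivity)]
  simpa using hcard

section Coordinates

variable (p : ι → Prop) [DecidablePred p]

def restrictCoords (x : EuclideanSpace ℝ ι) : EuclideanSpace ℝ {i // p i} :=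
  WithLp.toLp 2 fun i => x i

def extendCoordsByZero (y : EuclideanSpace ℝ {i // p i}) : EuclideanSpace ℝ ι :=
  WithLp.toLp 2 fun i => if h : p i then y ⟨i, h⟩ else 0

lemma norm_sub_extendCoordsByZero_sq (x : EuclideanSpace ℝ ι) (y : EuclideanSpace ℝ {i // p i}) :
    ‖x - extendCoordsByZero p y‖ ^ 2 =
      ‖restrictCoords p x - y‖ ^ 2 + ∑ i : {i // ¬ p i}, x i ^ 2 := by
  simp only [EuclideanSpace.real_norm_sq_eq, ← Fintype.sum_subtype_add_sum_subtype p]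
  congr 1 <;> refine sum_congr rfl fun i _ => ?_ <;>
    simp [restrictCoords, extendCoordsByZero, i.2]

lemma sum_subtype_sq_div_le_one {a : ι → ℝ} {x : EuclideanSpace ℝ ι} (hx : x ∈ axisEllipsoid a) :
    ∑ i : {i // p i}, (x i / a i) ^ 2 ≤ 1 := by
  rw [axisEllipsoid, Set.mem_ofPred_eq, ← Fintype.sum_subtype_add_sum_subtype p] at hx
  have : 0 ≤ ∑ i : {i // ¬ p i}, (x i / a i) ^ 2 := sum_nonneg fun i _ => sq_nonneg _
  linarith

end Coordinates

lemma sum_subtype_sq_le_sq_of_axes_le {a : ι → ℝ} (ha : ∀ i, 0 < a i) {x : EuclideanSpace ℝ ι}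
    (hx : x ∈ axisEllipsoid a) {r : ℝ} (p : ι → Prop) [DecidablePred p]
    (hpr : ∀ i, p i → a i ≤ r) :
    ∑ i : {i // p i}, x i ^ 2 ≤ r ^ 2 := by
  calc ∑ i : {i // p i}, x i ^ 2 = ∑ i : {i // p i}, a i ^ 2 * (x i / a i) ^ 2 :=
        sum_congr rfl fun i _ => by field_simp [(ha i).ne']
    _ ≤ ∑ i : {i // p i}, r ^ 2 * (x i / a i) ^ 2 := by
        gcongr with i
        exacts [(ha i).le, hpr i i.2]
    _ = r ^ 2 * ∑ i : {i // p i}, (x i / a i) ^ 2 := (mul_sum _ _ _).symm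
    _ ≤ r ^ 2 := mul_le_of_le_one_right (sq_nonneg r) (sum_subtype_sq_div_le_one p hx)

lemma exists_isCover_axisEllipsoid [DecidableEq ι] {a : ι → ℝ} (ha : ∀ i, 0 < a i) {r : ℝ≥0}
    (hr : 0 < r) :
    ∃ T : Finset (EuclideanSpace ℝ ι), IsCover (2 * r) (axisEllipsoid a) T ∧
      (T.card : ℝ) * (r : ℝ) ^ #{i | (r : ℝ) ≤ a i} ≤
        3 ^ #{i | (r : ℝ) ≤ a i} * ∏ i with (r : ℝ) ≤ a i, a i := by
  set p : ι → Prop := fun i => (r : ℝ) ≤ a i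
  obtain ⟨T₀, hT₀, hcard⟩ := exists_isCover_axisEllipsoid_of_le (a := fun i : {i // p i} => a i)
    (fun i => ha i) hr fun i => i.2
  refine ⟨T₀.image (extendCoordsByZero p), ?_, ?_⟩
  · rw [isCover_iff_subset_iUnion_closedBall] at hT₀ ⊢
    intro x hx
    obtain ⟨y, hy, hxy⟩ : ∃ y ∈ T₀, dist (restrictCoords p x) y ≤ r := by
      simpa using hT₀ (sum_subtype_sq_div_le_one p hx)
    have htail := sum_subtype_sq_le_sq_of_axes_le ha hx (r := r) (fun i => ¬ p i)
      fun i hi => (not_le.1 hi).le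
    simp only [coe_image, Set.mem_iUnion, Set.mem_image, exists_prop, exists_exists_and_eq_and,
      mem_closedBall]
    refine ⟨y, hy, ?_⟩
    rw [dist_eq_norm] at hxy ⊢
    rw [← sq_le_sq₀ (norm_nonneg _) (by positivity), norm_sub_extendCoordsByZero_sq]
    push_cast
    -- head part `≤ r ^ 2`, tail part `≤ r ^ 2`, and `2 r ^ 2 ≤ (2 r) ^ 2`
    nlinarith [norm_nonneg (restrictCoords p x - y)]
  · rw [Fintype.card_subtype, ← prod_subtype (univ.filter p) (by simp)] at hcard
    calc (#(T₀.image (extendCoordsByZero p)) : ℝ) * (r : ℝ) ^ #{i | (r : ℝ) ≤ a i}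
        ≤ #T₀ * (r : ℝ) ^ #{i | (r : ℝ) ≤ a i} := by gcongr; exact card_image_le
      _ ≤ _ := hcard

end AxisEllipsoid

lemma ek_closedBall_le_of_isCover {E : Type} [NormedAddCommGroup E] [NormedSpace ℝ E]
    {A : Set E} {ε : ℝ≥0} (hε : 0 < ε) {T : Finset E} (hT : IsCover ε A T) {k : ℕ}
    (hk : T.card ≤ 2 ^ k) : ek A (closedBall 0 1) k ≤ ε := by
  refine csInf_le ⟨0, fun t ht => ht.1.le⟩ ⟨hε, le_trans (Nat.sInf_le ⟨T, rfl, ?_⟩) hk⟩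
  rw [isCover_iff_subset_iUnion_closedBall] at hT
  simpa [smul_unitClosedBall, Real.norm_of_nonneg ε.coe_nonneg, vadd_closedBall] using hT

section Fin

variable {n : ℕ}

lemma Fin.filter_eq_filter_val_lt_card {p : Fin n → Prop} [DecidablePred p]
    (hp : ∀ i j, i ≤ j → p j → p i) :
    univ.filter p = univ.filter fun i : Fin n => (i : ℕ) < #(univ.filter p) := by
  ext i
  simp only [Finset.mem_filter, Finset.mem_univ, true_and]
  constructor
  · intro hi
    have := card_le_card fun j (hj : j ∈ Finset.Iic i) =>
      Finset.mem_filter.2 ⟨Finset.mem_univ j, hp j i (Finset.mem_Iic.1 hj) hi⟩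
    rw [Fin.card_Iic] at this
    omega
  · intro hi
    by_contra hni
    have := card_le_card fun j (hj : j ∈ univ.filter p) =>
      Finset.mem_Iio.2 (lt_of_not_ge fun hij => hni (hp i j hij (mem_filter.1 hj).2))
    rw [Fin.card_Iio] at this
    omega

/-- `w_m(ℰ)` when `lam` lists the semi-axes of `ℰ` in decreasing order. -/
noncomputable def topGeomMean (lam : Fin n → ℝ) (m : ℕ) : ℝ :=
  (∏ i ∈ univ.filter fun i : Fin n => (i : ℕ) < m, lam i) ^ ((1 : ℝ) / m)

lemma topGeomMean_pos {lam : Fin n → ℝ} (hlam : ∀ i, 0 < lam i) (m : ℕ) :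
    0 < topGeomMean lam m :=
  Real.rpow_pos_of_pos (prod_pos fun i _ => hlam i) _

lemma le_topGeomMean {lam : Fin n → ℝ} {m : ℕ} (hm : m ≠ 0) (hmn : m ≤ n) {c : ℝ} (hc : 0 ≤ c)
    (hcl : ∀ i : Fin n, (i : ℕ) < m → c ≤ lam i) : c ≤ topGeomMean lam m := by
  have hpow : c ^ m ≤ ∏ i ∈ univ.filter fun i : Fin n => (i : ℕ) < m, lam i := by
    calc c ^ m = ∏ _i ∈ univ.filter fun i : Fin n => (i : ℕ) < m, c := by
          rw [prod_const, Fin.card_filter_val_lt, min_eq_right hmn]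
      _ ≤ _ := prod_le_prod (fun _ _ => hc) fun i hi => hcl i (mem_filter.1 hi).2
  calc c = (c ^ m) ^ ((1 : ℝ) / m) := by rw [one_div, Real.pow_rpow_inv_natCast hc hm]
    _ ≤ topGeomMean lam m := by unfold topGeomMean; gcongr

lemma prod_le_two_pow_mul_pow {lam : Fin n → ℝ} (hlam : ∀ i, 0 ≤ lam i) {j m : ℕ} (hm : m ≠ 0)
    {s : ℝ} (hs : (2 : ℝ) ^ (-(j : ℝ) / m) * topGeomMean lam m ≤ s) :
    ∏ i ∈ univ.filter fun i : Fin n => (i : ℕ) < m, lam i ≤ 2 ^ j * s ^ m := by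
  have hP := prod_nonneg fun i (_ : i ∈ univ.filter fun i : Fin n => (i : ℕ) < m) => hlam i
  have hpow : ((2 : ℝ) ^ (-(j : ℝ) / m) * topGeomMean lam m) ^ m =
      (∏ i ∈ univ.filter fun i : Fin n => (i : ℕ) < m, lam i) / 2 ^ j := by
    rw [mul_pow, topGeomMean, one_div, Real.rpow_inv_natCast_pow hP hm,
      ← Real.rpow_mul_natCast zero_le_two, div_mul_cancel₀ _ (Nat.cast_ne_zero.2 hm),
      Real.rpow_neg zero_le_two, Real.rpow_natCast]
    ring
  have := pow_le_pow_left₀ (by unfold topGeomMean; positivity) hs m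
  rw [hpow, div_le_iff₀ (by positivity)] at this
  linarith

end Fin

lemma three_pow_mul_prod_filter_le {n : ℕ} {lam : Fin n → ℝ} (hlam : ∀ i, 0 < lam i)
    (hanti : Antitone lam) {j : ℕ} (hj : 1 ≤ j) {S : ℝ} (hS : 0 < S)
    (hle : ∀ m, 1 ≤ m → m ≤ min j n → (2 : ℝ) ^ (-(j : ℝ) / m) * topGeomMean lam m ≤ S) :
    3 ^ #{i | 3 * S ≤ lam i} * ∏ i with 3 * S ≤ lam i, lam i ≤
      2 ^ j * (3 * S) ^ #{i | 3 * S ≤ lam i} := by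
  set k := #{i | 3 * S ≤ lam i}
  have hfilter : univ.filter (fun i => 3 * S ≤ lam i) = univ.filter fun i : Fin n => (i : ℕ) < k :=
    Fin.filter_eq_filter_val_lt_card fun i i' hii' h => h.trans (hanti hii')
  have hkn : k ≤ n := (card_filter_le _ _).trans_eq (card_fin n)
  have hkj : k ≤ j := by
    by_contra! hjk
    have hbig : 3 * S ≤ topGeomMean lam j := le_topGeomMean (by omega) (by omega) (by positivity)
      fun i hi => by
        have hi' : i ∈ univ.filter fun i => 3 * S ≤ lam i := by
          rw [hfilter]
          simpa using hi.trans hjk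
        exact (mem_filter.1 hi').2
    have := hle j hj (by omega)
    rw [neg_div, div_self (by positivity), Real.rpow_neg_one] at this
    linarith
  rw [hfilter]
  rcases Nat.eq_zero_or_pos k with hk0 | hkpos
  · simp [hk0, one_le_pow₀ (by norm_num : (1 : ℝ) ≤ 2)]
  · have := prod_le_two_pow_mul_pow (fun i => (hlam i).le) hkpos.ne' (hle k hkpos (by omega))
    calc _ ≤ 3 ^ k * (2 ^ j * S ^ k) := by gcongr
      _ = 2 ^ j * (3 * S) ^ k := by ring

lemma OrthonormalBasis.setOf_sum_inner_div_sq_le_one {n : ℕ}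
    (u : OrthonormalBasis (Fin n) ℝ (EuclideanSpace ℝ (Fin n))) (a : Fin n → ℝ) :
    {x | ∑ i, (⟪x, u i⟫ / a i) ^ 2 ≤ 1} = u.repr.symm '' axisEllipsoid a := by
  rw [LinearIsometryEquiv.image_eq_preimage_symm, LinearIsometryEquiv.symm_symm]
  ext x
  simp [axisEllipsoid, OrthonormalBasis.repr_apply_apply, real_inner_comm]

/-- entropy numbers of ellipsoids:
`e_j(ℰ, B₂ⁿ) ≤ C sup_{1 ≤ m ≤ min(j,n)} 2^{-j/m} (λ₁⋯λ_m)^{1/m}`. -/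
theorem stmt18 : ∃ C : ℝ, 0 < C ∧ ∀ n : ℕ, 1 ≤ n →
    ∀ (u : OrthonormalBasis (Fin n) ℝ (EuclideanSpace ℝ (Fin n)))
      (lam : Fin n → ℝ), (∀ i, 0 < lam i) →
      (∀ i j : Fin n, i ≤ j → lam j ≤ lam i) →
    ∀ ℰ : Set (EuclideanSpace ℝ (Fin n)),
      ℰ = {x | ∑ i, (⟪x, u i⟫ / lam i) ^ 2 ≤ 1} →
    ∀ j : ℕ, 1 ≤ j →
      ek ℰ (closedBall (0 : EuclideanSpace ℝ (Fin n)) 1) j ≤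
        C * sSup { r | ∃ m : ℕ, 1 ≤ m ∧ m ≤ min j n ∧
          r = (2 : ℝ) ^ (-(j : ℝ) / m) *
            (∏ i ∈ Finset.univ.filter fun i : Fin n => (i : ℕ) < m, lam i) ^ ((1 : ℝ) / m) } := by
  refine ⟨6, by norm_num, fun n hn u lam hlam hanti ℰ hℰ j hj => ?_⟩
  set S := sSup {r | ∃ m : ℕ, 1 ≤ m ∧ m ≤ min j n ∧
    r = (2 : ℝ) ^ (-(j : ℝ) / m) * topGeomMean lam m}
  have hle : ∀ m, 1 ≤ m → m ≤ min j n → (2 : ℝ) ^ (-(j : ℝ) / m) * topGeomMean lam m ≤ S :=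
    fun m h1 h2 => le_csSup (((Set.finite_Icc 1 (min j n)).image _).subset
      (by rintro _ ⟨m, h1, h2, rfl⟩; exact ⟨m, ⟨h1, h2⟩, rfl⟩)).bddAbove ⟨m, h1, h2, rfl⟩
  have hS : 0 < S :=
    lt_of_lt_of_le (by have := topGeomMean_pos hlam 1; positivity) (hle 1 le_rfl (by omega))
  set r : ℝ≥0 := ⟨3 * S, by positivity⟩
  have hr : (r : ℝ) = 3 * S := rfl
  have hr0 : 0 < r := NNReal.coe_pos.1 (mul_pos three_pos hS)
  obtain ⟨T, hT, hcard⟩ := exists_isCover_axisEllipsoid hlam hr0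
  have hTcard : T.card ≤ 2 ^ j := by
    rw [hr] at hcard
    have := hcard.trans (three_pow_mul_prod_filter_le hlam hanti hj hS hle)
    exact_mod_cast le_of_mul_le_mul_right this (by positivity)
  subst hℰ
  rw [OrthonormalBasis.setOf_sum_inner_div_sq_le_one]
  calc ek _ _ j ≤ ((2 * r : ℝ≥0) : ℝ) := ek_closedBall_le_of_isCover (mul_pos two_pos hr0)
        (T := T.image u.repr.symm)
        (by rw [coe_image]; exact (u.repr.symm.isometry.isCover_image_iff _).2 hT)
        (card_image_le.trans hTcard)
    _ = 6 * S := by rw [NNReal.coe_mul, hr]; push_cast; ring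
end
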